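/- arXiv:1907.11159 — 3 statements merged into one kernel-verified Lean document; each statement's English description precedes it below -/
import Mathlib

section
/- Let T : ℕ × ℕ → ℤ be a number triangle with T(r,0) = T(0,0) + r*d2, T(0,k) = T(0,0) + k*d1 for integers d1, d2, with T(r,k) ≠ 0 for all r, k, and suppose there exists an integer D such that T(r,k) * T(r-1,k-1) = T(r,k-1) * T(r-1,k) + D for all r, k ≥ 1. Then there exists an integer d with T(0,0)*d = D + d1*d2 and T(r,k) = T(0,0) + k*d1 + r*d2 + r*k*d for all r, k ≥ 0. -/
/-!
A bilinear triangle `a + k d₁ + r d₂ + r k d` satisfies the multiplication rule with the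
constant `a d - d₁ d₂`. Conversely, the multiplication rule determines a triangle without zero
entries from its first row and column, since `T (r+1) (k+1)` can be solved for after cancelling
`T r k`. Choosing `d` so that the bilinear triangle matches `T` at `(1, 1)` makes the two
constants agree, and uniqueness gives `T` = bilinear triangle.
-/

namespace NumberTriangle

variable {R : Type*}

def MultiplicationRule [Mul R] [Add R] (T : ℕ → ℕ → R) (D : R) : Prop :=
  ∀ r k : ℕ, T (r + 1) (k + 1) * T r k = T (r + 1) k * T r (k + 1) + D

theorem eq_of_multiplicationRule [Ring R] [NoZeroDivisors R] {T S : ℕ → ℕ → R} {D : R}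
    (hT : MultiplicationRule T D) (hS : MultiplicationRule S D) (hne : ∀ r k, T r k ≠ 0)
    (hrow : ∀ k, T 0 k = S 0 k) (hcol : ∀ r, T r 0 = S r 0) (r k : ℕ) :
    T r k = S r k := by
  induction r generalizing k with
  | zero => exact hrow k
  | succ r ihr =>
    induction k with
    | zero => exact hcol (r + 1)
    | succ k ihk =>
      refine mul_right_cancel₀ (hne r k) ?_
      calc T (r + 1) (k + 1) * T r k
          = S (r + 1) k * S r (k + 1) + D := by rw [hT, ihk, ihr]
        _ = S (r + 1) (k + 1) * T r k := by rw [← hS, ihr]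

def bilinear [CommRing R] (a d₁ d₂ d : R) (r k : ℕ) : R :=
  a + k * d₁ + r * d₂ + r * k * d

theorem multiplicationRule_bilinear [CommRing R] (a d₁ d₂ d : R) :
    MultiplicationRule (bilinear a d₁ d₂ d) (a * d - d₁ * d₂) := by
  intro r k
  simp only [bilinear]
  push_cast
  ring

end NumberTriangle

open NumberTriangle in
theorem stmt_6 (T : ℕ → ℕ → ℤ) (d1 d2 D : ℤ)
    (h0 : ∀ r : ℕ, T r 0 = T 0 0 + r * d2)
    (h1 : ∀ k : ℕ, T 0 k = T 0 0 + k * d1)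
    (hne : ∀ r k : ℕ, T r k ≠ 0)
    (hmul : ∀ r k : ℕ, 1 ≤ r → 1 ≤ k →
      T r k * T (r-1) (k-1) = T r (k-1) * T (r-1) k + D) :
    ∃ d : ℤ, T 0 0 * d = D + d1 * d2 ∧
      ∀ r k : ℕ, T r k = T 0 0 + k * d1 + r * d2 + r * k * d := by
  have hT : MultiplicationRule T D := fun r k => by
    simpa using hmul (r + 1) (k + 1) (by omega) (by omega)
  have hconst : T 0 0 * (T 1 1 - T 0 0 - d1 - d2) = D + d1 * d2 := by
    have h11 := hT 0 0
    rw [h0 1, h1 1] at h11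
    push_cast at h11
    linear_combination h11
  refine ⟨T 1 1 - T 0 0 - d1 - d2, hconst, fun r k => ?_⟩
  have hS := multiplicationRule_bilinear (T 0 0) d1 d2 (T 1 1 - T 0 0 - d1 - d2)
  rw [hconst, add_sub_cancel_right] at hS
  refine eq_of_multiplicationRule hT hS hne (fun k => ?_) (fun r => ?_) r k
  · rw [h1 k]; simp [bilinear]
  · rw [h0 r]; simp [bilinear]
end

section
/- Let T : ℕ × ℕ → ℤ be a number triangle such that for each r, T(r,k) = T(r,0) + k*c_r (each major diagonal is arithmetic) and for each k, T(r,k) = T(0,k) + r*b_k (each minor diagonal is arithmetic), for some integer sequences c_r, b_k. Then T is a Generalized Rascal Triangle: setting c = T(0,0), d1 = c_0, d2 = b_0, and d = c_1 - c_0, one has T(r,k) = c + k*d1 + r*d2 + r*k*d for all r, k. -/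
/-!
Evaluating both diagonal laws at `k = 0` and `k = 1` gives
`c_r = T(0,1) - T(0,0) + r (b_1 - b_0)`, so the common differences of the major diagonals
themselves form an arithmetic progression, with step `b_1 - b_0 = c_1 - c_0`. Substituting this
and `T(r,0) = T(0,0) + r b_0` into `T(r,k) = T(r,0) + k c_r` gives the Rascal form.
-/

section RascalTriangle

variable {R : Type*} [CommRing R] {T : ℕ → ℕ → R} {cs bs : ℕ → R}

theorem diagonal_step_eq_add_mul (hmaj : ∀ r k : ℕ, T r k = T r 0 + k * cs r)
    (hmin : ∀ r k : ℕ, T r k = T 0 k + r * bs k) (r : ℕ) :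
    cs r = cs 0 + r * (bs 1 - bs 0) := by
  linear_combination hmaj 0 1 - hmaj r 1 + hmin r 1 - hmin r 0

theorem eq_rascal_of_diagonals_arith (hmaj : ∀ r k : ℕ, T r k = T r 0 + k * cs r)
    (hmin : ∀ r k : ℕ, T r k = T 0 k + r * bs k) (r k : ℕ) :
    T r k = T 0 0 + k * cs 0 + r * bs 0 + r * k * (cs 1 - cs 0) := by
  have hcs_r := diagonal_step_eq_add_mul hmaj hmin r
  have hcs_one := diagonal_step_eq_add_mul hmaj hmin 1
  rw [hmaj r k, hmin r 0, hcs_r, hcs_one]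
  ring

end RascalTriangle

theorem stmt_8 (T : ℕ → ℕ → ℤ) (cs bs : ℕ → ℤ)
    (hmaj : ∀ r k : ℕ, T r k = T r 0 + k * cs r)
    (hmin : ∀ r k : ℕ, T r k = T 0 k + r * bs k) :
    ∀ r k : ℕ, T r k = T 0 0 + k * cs 0 + r * bs 0 + r * k * (cs 1 - cs 0) :=
  eq_rascal_of_diagonals_arith hmaj hmin
end

section
/- Let c, d be integers and T(r,k) = c + r*k*d (the Generalized Rascal Triangle T(c,d,0,0)). Then for all r ≥ 1 and k ≥ 2, T(r,k) = T(r-1,k-1) + T(0, r+k-2) + T(1, r+k-3) + 2*(d - c). -/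
theorem stmt_19 (c d : ℤ) (T : ℕ → ℕ → ℤ)
    (hT : ∀ r k : ℕ, T r k = c + r * k * d) :
    ∀ r k : ℕ, 1 ≤ r → 2 ≤ k →
      T r k = T (r-1) (k-1) + T 0 (r+k-2) + T 1 (r+k-3) + 2 * (d - c) := by
  intro r k hr hk
  rw [hT, hT, hT, hT, Nat.cast_sub hr, Nat.cast_sub (by omega : 1 ≤ k),
    Nat.cast_sub (by omega : 2 ≤ r + k), Nat.cast_sub (by omega : 3 ≤ r + k)]
  push_cast
  ring
end
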